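/- arXiv:2106.13080 — 4 statements merged into one kernel-verified Lean document; each statement's English description precedes it below -/
import Mathlib

section
/- Let φ : Ω → ℝ be smooth on an open set Ω ⊆ ℝⁿ, and suppose there exists an invertible matrix C with pairwise orthogonal columns such that Cᵀ·Hφ(x)·C is a diagonal matrix with strictly positive entries for every x ∈ Ω. Then φ is strictly convex and the Christoffel matrices Γ_k = (Hφ)⁻¹∂_k(Hφ) are symmetric for all k. -/
open Matrix

private lemma posDef_conj_aux {n : ℕ} {A B : Matrix (Fin n) (Fin n) ℝ}
    (hA : A.PosDef) (hB : IsUnit B.det) : (Bᵀ * A * B).PosDef := by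
  constructor
  · have hAH : Aᴴ = A := hA.1
    show (Bᵀ * A * B)ᴴ = _
    rw [conjTranspose_mul, conjTranspose_mul, hAH]
    simp [Matrix.conjTranspose_eq_transpose_of_trivial, Matrix.mul_assoc]
  · have h := hA.conjTranspose_mul_mul_same (Matrix.mulVec_injective_iff_isUnit.mpr
      ((Matrix.isUnit_iff_isUnit_det B).mpr hB))
    rw [Matrix.conjTranspose_eq_transpose_of_trivial] at h
    exact h.2


/-- If Cᵀ·Hφ(x)·C is diagonal with strictly positive entries for all x ∈ Ω, for some
invertible C with pairwise orthogonal columns, then φ is strictly convex (positive definite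
Hessian) and the Christoffel matrices Γ_k = (Hφ)⁻¹∂_k(Hφ) are symmetric. -/
theorem stmt8 {n : ℕ} (Ω : Set (Fin n → ℝ)) (hΩ : IsOpen Ω) (hconn : IsConnected Ω)
    (φ : (Fin n → ℝ) → ℝ) (hφ : ContDiffOn ℝ (⊤ : ℕ∞) φ Ω)
    (H : (Fin n → ℝ) → Matrix (Fin n) (Fin n) ℝ)
    (hH : ∀ x ∈ Ω, ∀ i j, H x i j =
      iteratedFDerivWithin ℝ 2 φ Ω x ![Pi.single i 1, Pi.single j 1])
    (C : Matrix (Fin n) (Fin n) ℝ) (hCunit : IsUnit C.det) (hCorth : (Cᵀ * C).IsDiag)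
    (hdiag : ∀ x ∈ Ω, (Cᵀ * H x * C).IsDiag ∧ ∀ i, 0 < (Cᵀ * H x * C) i i) :
    (∀ x ∈ Ω, (H x).PosDef) ∧
    (∀ x ∈ Ω, ∀ k, ((H x)⁻¹ *
        Matrix.of (fun i j => fderivWithin ℝ (fun y => H y i j) Ω x (Pi.single k 1))).IsSymm) := by
  have hud : UniqueDiffOn ℝ Ω := hΩ.uniqueDiffOn
  -- positive definiteness
  have hpd : ∀ x ∈ Ω, (H x).PosDef := by
    intro x hx
    obtain ⟨hdg, hpos⟩ := hdiag x hx
    have hDpos : (Cᵀ * H x * C).PosDef := by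
      rw [← hdg.diagonal_diag]
      exact .diagonal fun i => hpos i
    have hCinv : IsUnit (C⁻¹).det := (Matrix.isUnit_nonsing_inv_det C hCunit)
    have h2 := posDef_conj_aux hDpos hCinv
    have e1 : (C⁻¹)ᵀ * Cᵀ = 1 := by
      rw [← transpose_mul, Matrix.mul_nonsing_inv C hCunit, transpose_one]
    have e2 : (C⁻¹)ᵀ * (Cᵀ * H x * C) * C⁻¹ = H x := by
      calc (C⁻¹)ᵀ * (Cᵀ * H x * C) * C⁻¹
          = ((C⁻¹)ᵀ * Cᵀ) * H x * (C * C⁻¹) := by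
            simp only [Matrix.mul_assoc]
        _ = H x := by rw [e1, Matrix.mul_nonsing_inv C hCunit, Matrix.one_mul, Matrix.mul_one]
    rwa [e2] at h2
  refine ⟨hpd, ?_⟩
  intro x hx k
  set G : Matrix (Fin n) (Fin n) ℝ :=
    Matrix.of (fun i j => fderivWithin ℝ (fun y => H y i j) Ω x (Pi.single k 1)) with hG
  -- differentiability of the entries of H on Ω
  have hFd : DifferentiableOn ℝ (iteratedFDerivWithin ℝ 2 φ Ω) Ω :=
    hφ.differentiableOn_iteratedFDerivWithin (by exact WithTop.coe_lt_coe.mpr (ENat.natCast_lt_top 2)) hud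
  have hdiff : ∀ a b : Fin n, DifferentiableWithinAt ℝ (fun y => H y a b) Ω x := by
    intro a b
    have h1 : DifferentiableWithinAt ℝ
        (fun y => iteratedFDerivWithin ℝ 2 φ Ω y ![Pi.single a 1, Pi.single b 1]) Ω x :=
      (hFd x hx).continuousMultilinear_apply_const _
    exact h1.congr (fun y hy => hH y hy a b) (hH x hx a b)
  -- Cᵀ * G * C is diagonal
  have hGdiag : (Cᵀ * G * C).IsDiag := by
    intro i j hij
    -- the scalar function (Cᵀ H y C) i j
    have hfun : (fun y => (Cᵀ * H y * C) i j)
        = fun y => ∑ a, ∑ b, (C a i * C b j) • H y a b := by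
      funext y
      simp only [Matrix.mul_apply, transpose_apply, Finset.sum_mul, smul_eq_mul]
      rw [Finset.sum_comm]
      congr 1; funext b; congr 1; funext a; ring
    have hder : HasFDerivWithinAt (fun y => (Cᵀ * H y * C) i j)
        (∑ a, ∑ b, (C a i * C b j) • fderivWithin ℝ (fun y => H y a b) Ω x) Ω x := by
      rw [hfun]
      exact HasFDerivWithinAt.fun_sum fun a _ => HasFDerivWithinAt.fun_sum fun b _ =>
        ((hdiff a b).hasFDerivWithinAt.const_smul (C a i * C b j))
    have h0 : fderivWithin ℝ (fun y => (Cᵀ * H y * C) i j) Ω x = 0 := by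
      have hz : ∀ y ∈ Ω, (Cᵀ * H y * C) i j = (0:ℝ) := fun y hy => (hdiag y hy).1 hij
      rw [fderivWithin_congr hz (hz x hx)]
      exact fderivWithin_const_apply 0
    have heq := hder.fderivWithin (hud x hx)
    rw [h0] at heq
    have heval := congrArg (fun L => L (Pi.single k 1)) heq
    simp only [ContinuousLinearMap.zero_apply, ContinuousLinearMap.sum_apply,
      ContinuousLinearMap.smul_apply, smul_eq_mul] at heval
    show (Cᵀ * G * C) i j = 0
    rw [← heval.symm] at *
    simp only [Matrix.mul_apply, transpose_apply, Finset.sum_mul, hG, Matrix.of_apply]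
    rw [← heval]
    rw [Finset.sum_comm]
    congr 1; funext b; congr 1; funext a; ring
  -- the algebra
  obtain ⟨hdg, hpos⟩ := hdiag x hx
  have hHpd := hpd x hx
  have hHdet : IsUnit (H x).det := hHpd.det_pos.ne'.isUnit
  set d : Fin n → ℝ := (Cᵀ * H x * C).diag with hd
  set d' : Fin n → ℝ := (Cᵀ * G * C).diag with hd'
  set e : Fin n → ℝ := (Cᵀ * C).diag with he
  have hD : Cᵀ * H x * C = diagonal d := hdg.diagonal_diag.symm
  have hD' : Cᵀ * G * C = diagonal d' := hGdiag.diagonal_diag.symm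
  have hE : Cᵀ * C = diagonal e := hCorth.diagonal_diag.symm
  have hdne : ∀ i, d i ≠ 0 := fun i => (hpos i).ne'
  have hEdet : IsUnit (Cᵀ * C).det := by
    rw [Matrix.det_mul, Matrix.det_transpose]
    exact hCunit.mul hCunit
  have hene : ∀ i, e i ≠ 0 := by
    intro i hi
    rw [hE, Matrix.det_diagonal] at hEdet
    exact (Finset.prod_eq_zero (Finset.mem_univ i) hi ▸ hEdet).ne_zero rfl
  set m : Fin n → ℝ := fun i => (d i)⁻¹ * d' i * (e i)⁻¹ with hm
  have key : H x * (C * diagonal m * Cᵀ) = G := by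
    have hcc : Cᵀ * (H x * (C * diagonal m * Cᵀ)) * C = Cᵀ * G * C := by
      calc Cᵀ * (H x * (C * diagonal m * Cᵀ)) * C
          = (Cᵀ * H x * C) * diagonal m * (Cᵀ * C) := by
            simp only [Matrix.mul_assoc]
        _ = diagonal d * diagonal m * diagonal e := by rw [hD, hE]
        _ = diagonal (fun i => d i * m i * e i) := by
            rw [Matrix.diagonal_mul_diagonal, Matrix.diagonal_mul_diagonal]
        _ = diagonal d' := by
            have hfun2 : (fun i => d i * m i * e i) = d' := by
              funext i
              rw [hm]
              field_simp [hdne i, hene i]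
            rw [hfun2]
        _ = Cᵀ * G * C := hD'.symm
    have hCTdet : IsUnit Cᵀ.det := by rwa [Matrix.det_transpose]
    have := congrArg (fun M => (Cᵀ)⁻¹ * M * C⁻¹) hcc
    simpa [Matrix.mul_assoc, Matrix.nonsing_inv_mul_cancel_left _ _ hCTdet,
      Matrix.mul_nonsing_inv_cancel_right _ _ hCunit] using this
  have hinv : (H x)⁻¹ * G = C * diagonal m * Cᵀ := by
    rw [← key, Matrix.nonsing_inv_mul_cancel_left _ _ hHdet]
  rw [hinv]
  show (C * diagonal m * Cᵀ)ᵀ = _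
  rw [transpose_mul, transpose_mul, transpose_transpose, Matrix.diagonal_transpose,
    Matrix.mul_assoc]
end

section
/- For a smooth strictly convex function φ of two variables with Hessian entries χ = φ₁₁, τ = φ₁₂, ζ = φ₂₂ and third derivatives υ = φ₁₁₁, ν = φ₁₁₂, ω = φ₁₂₂, ξ = φ₂₂₂, the pair of equations expressing ∂₂((Hφ)⁻¹)₁₁ = ∂₁((Hφ)⁻¹)₁₂ and ∂₂((Hφ)⁻¹)₂₁ = ∂₁((Hφ)⁻¹)₂₂ is equivalent, on the region χζ − τ² > 0, to the pair of quadratic relations (ζ−χ)ν + τ(υ−ω) = 0 and (ζ−χ)ω + τ(ν−ξ) = 0. -/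
open Matrix

section Aux

variable {E : Type*} [NormedAddCommGroup E] [NormedSpace ℝ E]
variable {Ω : Set E} {f : E → ℝ} {x : E}

lemma aux_hasFDeriv (hΩ : IsOpen Ω) (hf : ContDiffOn ℝ (⊤ : ℕ∞) f Ω) (hx : x ∈ Ω) (m : Fin 2 → E) :
    HasFDerivWithinAt (fun y => iteratedFDerivWithin ℝ 2 f Ω y m)
      ((ContinuousMultilinearMap.apply ℝ (fun _ : Fin 2 => E) ℝ m).comp
        (fderivWithin ℝ (iteratedFDerivWithin ℝ 2 f Ω) Ω x)) Ω x := by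
  have hd : DifferentiableOn ℝ (iteratedFDerivWithin ℝ 2 f Ω) Ω :=
    hf.differentiableOn_iteratedFDerivWithin (by exact WithTop.coe_lt_coe.2 (ENat.natCast_lt_top 2))
      hΩ.uniqueDiffOn
  exact ((ContinuousMultilinearMap.apply ℝ (fun _ : Fin 2 => E) ℝ m).hasFDerivAt).comp_hasFDerivWithinAt x
    ((hd x hx).hasFDerivWithinAt)

lemma aux_eval (m : Fin 2 → E) (v : E) :
    ((ContinuousMultilinearMap.apply ℝ (fun _ : Fin 2 => E) ℝ m).comp
      (fderivWithin ℝ (iteratedFDerivWithin ℝ 2 f Ω) Ω x)) v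
      = iteratedFDerivWithin ℝ 3 f Ω x (Fin.cons v m) := by
  simp only [show (3 : ℕ) = 2 + 1 from rfl, iteratedFDerivWithin_succ_apply_left]
  simp [Fin.tail_cons]

lemma aux_sym2 (hΩ : IsOpen Ω) (hf : ContDiffOn ℝ (⊤ : ℕ∞) f Ω) {y : E} (hy : y ∈ Ω) (v w : E) :
    iteratedFDerivWithin ℝ 2 f Ω y ![v, w] = iteratedFDerivWithin ℝ 2 f Ω y ![w, v] := by
  have h := (hf y hy).isSymmSndFDerivWithinAt (by rw [minSmoothness_of_isRCLikeNormedField]; exact WithTop.coe_le_coe.2 le_top) hΩ.uniqueDiffOn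
    (by rw [hΩ.interior_eq]; exact subset_closure hy) hy
  rw [iteratedFDerivWithin_two_apply _ hΩ.uniqueDiffOn hy,
    iteratedFDerivWithin_two_apply _ hΩ.uniqueDiffOn hy]
  simpa using h v w

lemma aux_sym3_last (hΩ : IsOpen Ω) (hf : ContDiffOn ℝ (⊤ : ℕ∞) f Ω) (hx : x ∈ Ω) (a b c : E) :
    iteratedFDerivWithin ℝ 3 f Ω x ![a, b, c] = iteratedFDerivWithin ℝ 3 f Ω x ![a, c, b] := by
  have h1 := ((aux_hasFDeriv hΩ hf hx ![b, c]).fderivWithin (hΩ.uniqueDiffOn x hx)).symm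
  have h2 := ((aux_hasFDeriv hΩ hf hx ![c, b]).fderivWithin (hΩ.uniqueDiffOn x hx)).symm
  have e1 : iteratedFDerivWithin ℝ 3 f Ω x ![a, b, c]
      = fderivWithin ℝ (fun y => iteratedFDerivWithin ℝ 2 f Ω y ![b, c]) Ω x a := by
    rw [← h1]; exact (aux_eval ![b, c] a).symm
  have e2 : iteratedFDerivWithin ℝ 3 f Ω x ![a, c, b]
      = fderivWithin ℝ (fun y => iteratedFDerivWithin ℝ 2 f Ω y ![c, b]) Ω x a := by
    rw [← h2]; exact (aux_eval ![c, b] a).symm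
  rw [e1, e2, fderivWithin_congr (fun y hy => aux_sym2 hΩ hf hy b c) (aux_sym2 hΩ hf hx b c)]

lemma aux_sym3_first (hΩ : IsOpen Ω) (hf : ContDiffOn ℝ (⊤ : ℕ∞) f Ω) (hx : x ∈ Ω) (a b c : E) :
    iteratedFDerivWithin ℝ 3 f Ω x ![a, b, c] = iteratedFDerivWithin ℝ 3 f Ω x ![b, a, c] := by
  have hf' : ContDiffOn ℝ (⊤ : ℕ∞) (fun y => fderivWithin ℝ f Ω y) Ω :=
    hf.fderivWithin hΩ.uniqueDiffOn (by simp)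
  have hsym := ((hf' x hx).isSymmSndFDerivWithinAt (by rw [minSmoothness_of_isRCLikeNormedField]; exact WithTop.coe_le_coe.2 le_top) hΩ.uniqueDiffOn
    (by rw [hΩ.interior_eq]; exact subset_closure hx) hx)
  have key : ∀ m : Fin 3 → E, iteratedFDerivWithin ℝ 3 f Ω x m
      = fderivWithin ℝ (fderivWithin ℝ (fun y => fderivWithin ℝ f Ω y) Ω) Ω x (m 0) (m 1) (m 2) := by
    intro m
    have h := iteratedFDerivWithin_succ_apply_right (𝕜 := ℝ) (n := 2) (f := f) (s := Ω)
      hΩ.uniqueDiffOn hx m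
    rw [iteratedFDerivWithin_two_apply _ hΩ.uniqueDiffOn hx] at h
    exact h
  rw [key, key]
  simp only [Matrix.cons_val_zero, Matrix.cons_val_one, Matrix.head_cons]
  have h2 : (![a, b, c] : Fin 3 → E) 2 = c := rfl
  have h2' : (![b, a, c] : Fin 3 → E) 2 = c := rfl
  rw [h2, h2']
  exact congrArg (fun L => L c) (hsym a b)

end Aux

section Aux2
variable {E : Type*} [NormedAddCommGroup E] [NormedSpace ℝ E]
variable {Ω : Set E} {f : E → ℝ} {x : E}

lemma aux_eval'' (m1 m2 v : E) :
    fderivWithin ℝ (iteratedFDerivWithin ℝ 2 f Ω) Ω x v ![m1, m2]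
      = iteratedFDerivWithin ℝ 3 f Ω x ![v, m1, m2] :=
  aux_eval ![m1, m2] v

lemma aux_entry (hΩ : IsOpen Ω) (hf : ContDiffOn ℝ (⊤ : ℕ∞) f Ω) (hx : x ∈ Ω) (a b m1 m2 v : E)
    (hne : iteratedFDerivWithin ℝ 2 f Ω x ![a, a] * iteratedFDerivWithin ℝ 2 f Ω x ![b, b]
      - iteratedFDerivWithin ℝ 2 f Ω x ![a, b] * iteratedFDerivWithin ℝ 2 f Ω x ![a, b] ≠ 0) :
    fderivWithin ℝ (fun y => iteratedFDerivWithin ℝ 2 f Ω y ![m1, m2] *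
      (iteratedFDerivWithin ℝ 2 f Ω y ![a, a] * iteratedFDerivWithin ℝ 2 f Ω y ![b, b]
        - iteratedFDerivWithin ℝ 2 f Ω y ![a, b] * iteratedFDerivWithin ℝ 2 f Ω y ![a, b])⁻¹)
      Ω x v
    = iteratedFDerivWithin ℝ 3 f Ω x ![v, m1, m2] *
        (iteratedFDerivWithin ℝ 2 f Ω x ![a, a] * iteratedFDerivWithin ℝ 2 f Ω x ![b, b]
          - iteratedFDerivWithin ℝ 2 f Ω x ![a, b] * iteratedFDerivWithin ℝ 2 f Ω x ![a, b])⁻¹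
      + iteratedFDerivWithin ℝ 2 f Ω x ![m1, m2] *
        (-(((iteratedFDerivWithin ℝ 2 f Ω x ![a, a] * iteratedFDerivWithin ℝ 2 f Ω x ![b, b]
          - iteratedFDerivWithin ℝ 2 f Ω x ![a, b] * iteratedFDerivWithin ℝ 2 f Ω x ![a, b])) ^ 2)⁻¹ *
          (iteratedFDerivWithin ℝ 2 f Ω x ![a, a] * iteratedFDerivWithin ℝ 3 f Ω x ![v, b, b]
            + iteratedFDerivWithin ℝ 2 f Ω x ![b, b] * iteratedFDerivWithin ℝ 3 f Ω x ![v, a, a]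
            - (iteratedFDerivWithin ℝ 2 f Ω x ![a, b] * iteratedFDerivWithin ℝ 3 f Ω x ![v, a, b]
              + iteratedFDerivWithin ℝ 2 f Ω x ![a, b] * iteratedFDerivWithin ℝ 3 f Ω x ![v, a, b]))) := by
  have hM := aux_hasFDeriv hΩ hf hx ![m1, m2]
  have hA := aux_hasFDeriv hΩ hf hx ![a, a]
  have hB := aux_hasFDeriv hΩ hf hx ![b, b]
  have hT := aux_hasFDeriv hΩ hf hx ![a, b]
  have hD := (hA.mul hB).sub (hT.mul hT)
  have hDinv := (hasFDerivAt_inv hne).comp_hasFDerivWithinAt x hD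
  have key := ((hM.mul hDinv).congr (f₁ := fun y => iteratedFDerivWithin ℝ 2 f Ω y ![m1, m2] *
      (iteratedFDerivWithin ℝ 2 f Ω y ![a, a] * iteratedFDerivWithin ℝ 2 f Ω y ![b, b]
        - iteratedFDerivWithin ℝ 2 f Ω y ![a, b] * iteratedFDerivWithin ℝ 2 f Ω y ![a, b])⁻¹)
      (fun y _ => rfl) rfl)
  rw [key.fderivWithin (hΩ.uniqueDiffOn x hx)]
  simp only [ContinuousLinearMap.add_apply, ContinuousLinearMap.smul_apply,
    ContinuousLinearMap.sub_apply, ContinuousLinearMap.comp_apply,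
    ContinuousLinearMap.smulRight_apply, ContinuousLinearMap.one_apply,
    ContinuousMultilinearMap.apply_apply, Function.comp_apply, smul_eq_mul, aux_eval'',
    ContinuousLinearMap.toSpanSingleton_apply, Pi.mul_apply, Pi.sub_apply, Pi.pow_apply]
  ring

end Aux2


/-- For a smooth strictly convex function of two variables with second derivatives
χ, τ, ζ and third derivatives υ, ν, ω, ξ, on the region χζ − τ² > 0 the pair of
equations ∂₂((Hφ)⁻¹)₁₁ = ∂₁((Hφ)⁻¹)₁₂ and ∂₂((Hφ)⁻¹)₂₁ = ∂₁((Hφ)⁻¹)₂₂ is equivalent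
to (ζ−χ)ν + τ(υ−ω) = 0 and (ζ−χ)ω + τ(ν−ξ) = 0. -/


theorem stmt15 (Ω : Set (Fin 2 → ℝ)) (hΩ : IsOpen Ω)
    (φ : (Fin 2 → ℝ) → ℝ) (hφ : ContDiffOn ℝ (⊤ : ℕ∞) φ Ω)
    (χ τ ζ υ ν ω ξ : (Fin 2 → ℝ) → ℝ)
    (hχ : ∀ x ∈ Ω, χ x = iteratedFDerivWithin ℝ 2 φ Ω x
      ![Pi.single 0 1, Pi.single 0 1])
    (hτ : ∀ x ∈ Ω, τ x = iteratedFDerivWithin ℝ 2 φ Ω x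
      ![Pi.single 0 1, Pi.single 1 1])
    (hζ : ∀ x ∈ Ω, ζ x = iteratedFDerivWithin ℝ 2 φ Ω x
      ![Pi.single 1 1, Pi.single 1 1])
    (hυ : ∀ x ∈ Ω, υ x = iteratedFDerivWithin ℝ 3 φ Ω x
      ![Pi.single 0 1, Pi.single 0 1, Pi.single 0 1])
    (hν : ∀ x ∈ Ω, ν x = iteratedFDerivWithin ℝ 3 φ Ω x
      ![Pi.single 0 1, Pi.single 0 1, Pi.single 1 1])
    (hω : ∀ x ∈ Ω, ω x = iteratedFDerivWithin ℝ 3 φ Ω x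
      ![Pi.single 0 1, Pi.single 1 1, Pi.single 1 1])
    (hξ : ∀ x ∈ Ω, ξ x = iteratedFDerivWithin ℝ 3 φ Ω x
      ![Pi.single 1 1, Pi.single 1 1, Pi.single 1 1])
    (H : (Fin 2 → ℝ) → Matrix (Fin 2) (Fin 2) ℝ)
    (hH : ∀ x, H x = !![χ x, τ x; τ x, ζ x])
    (hconv : ∀ x ∈ Ω, 0 < χ x * ζ x - (τ x) ^ 2 ∧ 0 < χ x + ζ x) :
    ∀ x ∈ Ω,
      ((fderivWithin ℝ (fun y => (H y)⁻¹ 0 0) Ω x (Pi.single 1 1) =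
          fderivWithin ℝ (fun y => (H y)⁻¹ 0 1) Ω x (Pi.single 0 1)) ∧
        (fderivWithin ℝ (fun y => (H y)⁻¹ 1 0) Ω x (Pi.single 1 1) =
          fderivWithin ℝ (fun y => (H y)⁻¹ 1 1) Ω x (Pi.single 0 1))) ↔
      ((ζ x - χ x) * ν x + τ x * (υ x - ω x) = 0 ∧
        (ζ x - χ x) * ω x + τ x * (ν x - ξ x) = 0) := by
  intro x hx
  have hU : UniqueDiffOn ℝ Ω := hΩ.uniqueDiffOn
  obtain ⟨hdpos, hspos⟩ := hconv x hx
  set e0 : Fin 2 → ℝ := Pi.single 0 1 with he0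
  set e1 : Fin 2 → ℝ := Pi.single 1 1 with he1
  have hχx := hχ x hx
  have hτx := hτ x hx
  have hζx := hζ x hx
  have hne : iteratedFDerivWithin ℝ 2 φ Ω x ![e0, e0] * iteratedFDerivWithin ℝ 2 φ Ω x ![e1, e1]
      - iteratedFDerivWithin ℝ 2 φ Ω x ![e0, e1] * iteratedFDerivWithin ℝ 2 φ Ω x ![e0, e1] ≠ 0 := by
    rw [← hχx, ← hτx, ← hζx]; nlinarith [hdpos]
  have hentry : ∀ y ∈ Ω, (H y)⁻¹ =
      (iteratedFDerivWithin ℝ 2 φ Ω y ![e0, e0] * iteratedFDerivWithin ℝ 2 φ Ω y ![e1, e1]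
        - iteratedFDerivWithin ℝ 2 φ Ω y ![e0, e1] * iteratedFDerivWithin ℝ 2 φ Ω y ![e0, e1])⁻¹ •
      !![iteratedFDerivWithin ℝ 2 φ Ω y ![e1, e1], -iteratedFDerivWithin ℝ 2 φ Ω y ![e0, e1];
         -iteratedFDerivWithin ℝ 2 φ Ω y ![e0, e1], iteratedFDerivWithin ℝ 2 φ Ω y ![e0, e0]] := by
    intro y hy
    rw [hH y, Matrix.inv_def, Matrix.adjugate_fin_two_of, Matrix.det_fin_two_of,
      Ring.inverse_eq_inv', hχ y hy, hτ y hy, hζ y hy]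
  have F00 : fderivWithin ℝ (fun y => (H y)⁻¹ 0 0) Ω x = fderivWithin ℝ (fun y =>
      iteratedFDerivWithin ℝ 2 φ Ω y ![e1, e1] *
      (iteratedFDerivWithin ℝ 2 φ Ω y ![e0, e0] * iteratedFDerivWithin ℝ 2 φ Ω y ![e1, e1]
        - iteratedFDerivWithin ℝ 2 φ Ω y ![e0, e1] * iteratedFDerivWithin ℝ 2 φ Ω y ![e0, e1])⁻¹) Ω x :=
    fderivWithin_congr (fun y hy => by rw [hentry y hy]; simp [mul_comm])
      (by rw [hentry x hx]; simp [mul_comm])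
  have F11 : fderivWithin ℝ (fun y => (H y)⁻¹ 1 1) Ω x = fderivWithin ℝ (fun y =>
      iteratedFDerivWithin ℝ 2 φ Ω y ![e0, e0] *
      (iteratedFDerivWithin ℝ 2 φ Ω y ![e0, e0] * iteratedFDerivWithin ℝ 2 φ Ω y ![e1, e1]
        - iteratedFDerivWithin ℝ 2 φ Ω y ![e0, e1] * iteratedFDerivWithin ℝ 2 φ Ω y ![e0, e1])⁻¹) Ω x :=
    fderivWithin_congr (fun y hy => by rw [hentry y hy]; simp [mul_comm])
      (by rw [hentry x hx]; simp [mul_comm])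
  have F01 : fderivWithin ℝ (fun y => (H y)⁻¹ 0 1) Ω x = -fderivWithin ℝ (fun y =>
      iteratedFDerivWithin ℝ 2 φ Ω y ![e0, e1] *
      (iteratedFDerivWithin ℝ 2 φ Ω y ![e0, e0] * iteratedFDerivWithin ℝ 2 φ Ω y ![e1, e1]
        - iteratedFDerivWithin ℝ 2 φ Ω y ![e0, e1] * iteratedFDerivWithin ℝ 2 φ Ω y ![e0, e1])⁻¹) Ω x := by
    rw [← fderivWithin_neg (hU x hx)]
    exact fderivWithin_congr (fun y hy => by rw [hentry y hy]; simp [mul_comm])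
      (by rw [hentry x hx]; simp [mul_comm])
  have F10 : fderivWithin ℝ (fun y => (H y)⁻¹ 1 0) Ω x = -fderivWithin ℝ (fun y =>
      iteratedFDerivWithin ℝ 2 φ Ω y ![e0, e1] *
      (iteratedFDerivWithin ℝ 2 φ Ω y ![e0, e0] * iteratedFDerivWithin ℝ 2 φ Ω y ![e1, e1]
        - iteratedFDerivWithin ℝ 2 φ Ω y ![e0, e1] * iteratedFDerivWithin ℝ 2 φ Ω y ![e0, e1])⁻¹) Ω x := by
    rw [← fderivWithin_neg (hU x hx)]
    exact fderivWithin_congr (fun y hy => by rw [hentry y hy]; simp [mul_comm])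
      (by rw [hentry x hx]; simp [mul_comm])
  have hA' : iteratedFDerivWithin ℝ 3 φ Ω x ![e0, e0, e0] = υ x := (hυ x hx).symm
  have hB' : iteratedFDerivWithin ℝ 3 φ Ω x ![e0, e0, e1] = ν x := (hν x hx).symm
  have hC' : iteratedFDerivWithin ℝ 3 φ Ω x ![e1, e0, e0] = ν x := by
    rw [aux_sym3_first hΩ hφ hx, aux_sym3_last hΩ hφ hx]; exact (hν x hx).symm
  have hD' : iteratedFDerivWithin ℝ 3 φ Ω x ![e0, e1, e1] = ω x := (hω x hx).symm
  have hE' : iteratedFDerivWithin ℝ 3 φ Ω x ![e1, e0, e1] = ω x := by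
    rw [aux_sym3_first hΩ hφ hx]; exact (hω x hx).symm
  have hF' : iteratedFDerivWithin ℝ 3 φ Ω x ![e1, e1, e1] = ξ x := (hξ x hx).symm
  rw [F00, F01, F10, F11, ContinuousLinearMap.neg_apply, ContinuousLinearMap.neg_apply,
    aux_entry hΩ hφ hx e0 e1 e1 e1 e1 hne, aux_entry hΩ hφ hx e0 e1 e0 e1 e0 hne,
    aux_entry hΩ hφ hx e0 e1 e0 e1 e1 hne, aux_entry hΩ hφ hx e0 e1 e0 e0 e0 hne]
  rw [hA', hB', hC', hD', hE', hF', ← hχx, ← hτx, ← hζx]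
  set c := χ x
  set t := τ x
  set z := ζ x
  set u := υ x
  set n := ν x
  set o := ω x
  set s := ξ x
  clear_value c t z u n o s
  clear F00 F01 F10 F11 hentry hne hA' hB' hC' hD' hE' hF' hχx hτx hζx hU hx hφ hχ hτ hζ hυ hν hω hξ hH hconv hspos
  have hd : (0:ℝ) < c * z - t * t := by nlinarith
  have hdne : c * z - t * t ≠ 0 := ne_of_gt hd
  have hfne : t * t - c * z ≠ 0 := by nlinarith
  have reduce : ∀ X Y R : ℝ, (X - Y = R * ((c * z - t * t) ^ 2)⁻¹) → ((X = Y) ↔ R = 0) := by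
    intro X Y R hfact
    constructor
    · intro h
      have h' : X - Y = 0 := sub_eq_zero.mpr h
      rw [hfact] at h'
      rcases mul_eq_zero.mp h' with h'' | h''
      · exact h''
      · exact absurd h'' (inv_ne_zero (pow_ne_zero 2 hdne))
    · intro h
      have h' : X - Y = 0 := by rw [hfact, h, zero_mul]
      exact sub_eq_zero.mp h'
  constructor
  · rintro ⟨h1, h2⟩
    have H1 : -z * ((z - c) * n + t * (u - o)) + t * ((z - c) * o + t * (n - s)) = 0 :=
      (reduce _ _ (-z * ((z - c) * n + t * (u - o)) + t * ((z - c) * o + t * (n - s)))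
        (by field_simp; ring)).mp h1
    have H2 : t * ((z - c) * n + t * (u - o)) - c * ((z - c) * o + t * (n - s)) = 0 :=
      (reduce _ _ (t * ((z - c) * n + t * (u - o)) - c * ((z - c) * o + t * (n - s)))
        (by field_simp; ring)).mp h2
    constructor
    · have h3 : (t * t - c * z) * ((z - c) * n + t * (u - o)) = 0 := by
        linear_combination c * H1 + t * H2
      rcases mul_eq_zero.mp h3 with h | h
      · exact absurd h hfne
      · exact h
    · have h3 : (t * t - c * z) * ((z - c) * o + t * (n - s)) = 0 := by
        linear_combination t * H1 + z * H2
      rcases mul_eq_zero.mp h3 with h | h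
      · exact absurd h hfne
      · exact h
  · rintro ⟨h1, h2⟩
    constructor
    · exact (reduce _ _ (-z * ((z - c) * n + t * (u - o)) + t * ((z - c) * o + t * (n - s)))
        (by field_simp; ring)).mpr (by linear_combination -z * h1 + t * h2)
    · exact (reduce _ _ (t * ((z - c) * n + t * (u - o)) - c * ((z - c) * o + t * (n - s)))
        (by field_simp; ring)).mpr (by linear_combination t * h1 - c * h2)
end

section
/- Let φ be a smooth strictly convex function of two variables satisfying a φ₁₁ − a φ₂₂ = b φ₁₂ for two distinct points [a:b] ≠ [a':b'] of the real projective line (with (a,b), (a',b') ≠ (0,0) nonproportional). Then φ₁₂ ≡ 0 and φ₁₁ ≡ φ₂₂ on Ω, and all third partial derivatives of φ vanish; hence φ(x₁,x₂) = k(x₁² + x₂²) + ℓ(x₁,x₂) + c for some constant k > 0, affine form ℓ, and constant c, on each connected component. -/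
open Matrix Filter Topology

lemma aux_const {E F : Type*} [NormedAddCommGroup E] [NormedSpace ℝ E]
    [NormedAddCommGroup F] [NormedSpace ℝ F] {s : Set E} (hs : IsOpen s)
    (hc : IsPreconnected s) {f : E → F}
    (hf : ∀ x ∈ s, HasFDerivAt f (0 : E →L[ℝ] F) x) :
    ∀ x ∈ s, ∀ y ∈ s, f x = f y := by
  have key : ∀ z ∈ s, ∀ᶠ y in 𝓝 z, f y = f z := by
    intro z hz
    obtain ⟨ε, εpos, hball⟩ := Metric.isOpen_iff.1 hs z hz
    filter_upwards [Metric.ball_mem_nhds z εpos] with y hy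
    refine (convex_ball z ε).is_const_of_fderivWithin_eq_zero (𝕜 := ℝ) (f := f) ?_ ?_ hy
      (Metric.mem_ball_self εpos)
    · intro w hw
      exact ((hf w (hball hw)).differentiableAt).differentiableWithinAt
    · intro w hw
      rw [fderivWithin_of_isOpen Metric.isOpen_ball hw]
      exact (hf w (hball hw)).fderiv
  intro x hx y hy
  by_contra hne
  have hu : IsOpen {z | z ∈ s ∧ f z = f x} := by
    rw [isOpen_iff_mem_nhds]
    rintro z ⟨hzs, hfz⟩
    filter_upwards [key z hzs, hs.mem_nhds hzs] with w hw hws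
    exact ⟨hws, hw.trans hfz⟩
  have hv : IsOpen {z | z ∈ s ∧ f z ≠ f x} := by
    rw [isOpen_iff_mem_nhds]
    rintro z ⟨hzs, hfz⟩
    filter_upwards [key z hzs, hs.mem_nhds hzs] with w hw hws
    exact ⟨hws, hw.symm ▸ hfz⟩
  obtain ⟨w, -, ⟨-, hw1⟩, ⟨-, hw2⟩⟩ := hc _ _ hu hv
    (fun z hz => by
      by_cases h : f z = f x
      · exact Or.inl ⟨hz, h⟩
      · exact Or.inr ⟨hz, h⟩)
    ⟨x, hx, hx, rfl⟩ ⟨y, hy, hy, fun h => hne h.symm⟩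
  exact hw2 hw1

lemma aux_decomp (v : Fin 2 → ℝ) :
    v = v 0 • (Pi.single 0 1 : Fin 2 → ℝ) + v 1 • (Pi.single 1 1 : Fin 2 → ℝ) := by
  ext i; fin_cases i <;> simp

lemma aux_clm_zero (T : (Fin 2 → ℝ) →L[ℝ] ℝ) (h0 : T (Pi.single 0 1) = 0)
    (h1 : T (Pi.single 1 1) = 0) : T = 0 := by
  refine ContinuousLinearMap.ext fun v => ?_
  have hv := aux_decomp v
  calc T v = T (v 0 • (Pi.single 0 1 : Fin 2 → ℝ) + v 1 • (Pi.single 1 1 : Fin 2 → ℝ)) := by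
        rw [← hv]
    _ = 0 := by rw [map_add, _root_.map_smul, _root_.map_smul, h0, h1]; simp

lemma aux_pull {f : (Fin 2 → ℝ) → ((Fin 2 → ℝ) →L[ℝ] ℝ)} {x : Fin 2 → ℝ}
    (hf : DifferentiableAt ℝ f x) (v w : Fin 2 → ℝ) :
    fderiv ℝ (fun y => f y w) x v = fderiv ℝ f x v w := by
  rw [fderiv_clm_apply hf (differentiableAt_const w)]
  simp

/-- A smooth strictly convex function of two variables solving a φ₁₁ − a φ₂₂ = b φ₁₂ for
two nonproportional parameter pairs has φ₁₂ ≡ 0, φ₁₁ ≡ φ₂₂, vanishing third derivatives,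
and is k(x₁² + x₂²) plus an affine function, with k > 0. -/
theorem stmt16 (Ω : Set (Fin 2 → ℝ)) (hΩ : IsOpen Ω) (hconn : IsConnected Ω)
    (φ : (Fin 2 → ℝ) → ℝ) (hφ : ContDiffOn ℝ (⊤ : ℕ∞) φ Ω)
    (H : (Fin 2 → ℝ) → Matrix (Fin 2) (Fin 2) ℝ)
    (hH : ∀ x ∈ Ω, ∀ i j, H x i j =
      iteratedFDerivWithin ℝ 2 φ Ω x ![Pi.single i 1, Pi.single j 1])
    (hpos : ∀ x ∈ Ω, (H x).PosDef)
    (a b a' b' : ℝ) (hab : (a, b) ≠ (0, 0)) (hab' : (a', b') ≠ (0, 0))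
    (hnonprop : a * b' - a' * b ≠ 0)
    (h1 : ∀ x ∈ Ω, a * H x 0 0 - a * H x 1 1 = b * H x 0 1)
    (h2 : ∀ x ∈ Ω, a' * H x 0 0 - a' * H x 1 1 = b' * H x 0 1) :
    (∀ x ∈ Ω, H x 0 1 = 0 ∧ H x 0 0 = H x 1 1) ∧
    (∀ x ∈ Ω, ∀ i j k : Fin 2,
      iteratedFDerivWithin ℝ 3 φ Ω x ![Pi.single i 1, Pi.single j 1, Pi.single k 1] = 0) ∧
    ∃ (k : ℝ) (l : Fin 2 → ℝ) (c : ℝ), 0 < k ∧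
      ∀ x ∈ Ω, φ x = k * ((x 0) ^ 2 + (x 1) ^ 2) + (l 0 * x 0 + l 1 * x 1) + c := by
  classical
  obtain ⟨⟨x₀, h₀⟩, hpre⟩ := hconn
  -- Part 1 : linear algebra
  have P1 : ∀ y ∈ Ω, H y 0 1 = 0 ∧ H y 0 0 = H y 1 1 := by
    intro y hy
    have e1 := h1 y hy
    have e2 := h2 y hy
    have hv : H y 0 1 = 0 := by
      have h3 : (a * b' - a' * b) * H y 0 1 = 0 := by linear_combination a' * e1 - a * e2
      rcases mul_eq_zero.1 h3 with h | h
      · exact absurd h hnonprop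
      · exact h
    refine ⟨hv, ?_⟩
    by_contra hne
    have hu : H y 0 0 - H y 1 1 ≠ 0 := sub_ne_zero.2 hne
    have ha0 : a = 0 := by
      have h4 : a * (H y 0 0 - H y 1 1) = 0 := by rw [hv] at e1; linarith
      rcases mul_eq_zero.1 h4 with h | h
      · exact h
      · exact absurd h hu
    have ha0' : a' = 0 := by
      have h4 : a' * (H y 0 0 - H y 1 1) = 0 := by rw [hv] at e2; linarith
      rcases mul_eq_zero.1 h4 with h | h
      · exact h
      · exact absurd h hu
    apply hnonprop
    rw [ha0, ha0']; ring
  have P1' : ∀ y ∈ Ω, H y 1 0 = 0 := by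
    intro y hy
    have := (hpos y hy).1.apply 1 0
    simp only [star_trivial] at this
    rw [← this]
    exact (P1 y hy).1
  -- smoothness bookkeeping
  have hφat : ∀ x ∈ Ω, ContDiffAt ℝ (⊤ : ℕ∞) φ x := fun x hx => (hφ x hx).contDiffAt (hΩ.mem_nhds hx)
  set g : Fin 2 → (Fin 2 → ℝ) → ℝ := fun j y => fderiv ℝ φ y (Pi.single j 1) with hg_def
  have hg2 : ∀ (j : Fin 2), ∀ x ∈ Ω, ContDiffAt ℝ 2 (g j) x := fun j x hx =>
    (((hφat x hx).fderiv_right (m := 2) (WithTop.coe_le_coe.2 le_top)).clm_apply contDiffAt_const)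
  have hgd : ∀ (j : Fin 2), ∀ x ∈ Ω, DifferentiableAt ℝ (fderiv ℝ (g j)) x := fun j x hx =>
    (((hg2 j x hx).fderiv_right (m := 1) (by norm_num)).differentiableAt one_ne_zero)
  have HA : ∀ y ∈ Ω, ∀ i j : Fin 2, H y i j = fderiv ℝ (g j) y (Pi.single i 1) := by
    intro y hy i j
    have hdφ : DifferentiableAt ℝ (fderiv ℝ φ) y :=
      ((hφat y hy).fderiv_right (m := 1) (WithTop.coe_le_coe.2 le_top)).differentiableAt one_ne_zero
    rw [hH y hy i j, iteratedFDerivWithin_of_isOpen 2 hΩ hy, iteratedFDeriv_two_apply]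
    simp only [Matrix.cons_val_zero, Matrix.cons_val_one, Matrix.head_cons]
    rw [hg_def, ← aux_pull hdφ (Pi.single i 1) (Pi.single j 1)]
  have hsym : ∀ x ∈ Ω, ∀ (j : Fin 2) (v w : Fin 2 → ℝ),
      fderiv ℝ (fderiv ℝ (g j)) x v w = fderiv ℝ (fderiv ℝ (g j)) x w v :=
    fun x hx j => (hg2 j x hx).isSymmSndFDerivAt (by simp [minSmoothness_of_isRCLikeNormedField])
  -- all third derivatives vanish
  have C0 : ∀ x ∈ Ω, ∀ i j k : Fin 2,
      fderiv ℝ (fderiv ℝ (g k)) x (Pi.single i 1) (Pi.single j 1) = 0 := by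
    intro x hx
    have base : ∀ i j k : Fin 2, j ≠ k →
        fderiv ℝ (fderiv ℝ (g k)) x (Pi.single i 1) (Pi.single j 1) = 0 := by
      intro i j k hjk
      rw [← aux_pull (hgd k x hx) (Pi.single i 1) (Pi.single j 1)]
      have heq : (fun y => fderiv ℝ (g k) y (Pi.single j 1)) =ᶠ[𝓝 x] (fun _ => (0:ℝ)) := by
        filter_upwards [hΩ.mem_nhds hx] with y hy
        rw [← HA y hy j k]
        fin_cases j <;> fin_cases k
        · exact absurd rfl hjk
        · exact (P1 y hy).1
        · exact P1' y hy
        · exact absurd rfl hjk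
      rw [heq.fderiv_eq]
      simp
    have key : ∀ p q : Fin 2, p ≠ q →
        fderiv ℝ (fderiv ℝ (g p)) x (Pi.single p 1) (Pi.single p 1) = 0 := by
      intro p q hpq
      rw [← aux_pull (hgd p x hx) (Pi.single p 1) (Pi.single p 1)]
      have heq : (fun y => fderiv ℝ (g p) y (Pi.single p 1)) =ᶠ[𝓝 x]
          (fun y => fderiv ℝ (g q) y (Pi.single q 1)) := by
        filter_upwards [hΩ.mem_nhds hx] with y hy
        rw [← HA y hy p p, ← HA y hy q q]
        fin_cases p <;> fin_cases q
        · rfl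
        · exact (P1 y hy).2
        · exact (P1 y hy).2.symm
        · rfl
      rw [heq.fderiv_eq, aux_pull (hgd q x hx) (Pi.single p 1) (Pi.single q 1),
        hsym x hx q (Pi.single p 1) (Pi.single q 1)]
      exact base q p q hpq
    intro i j k
    by_cases hjk : j = k
    · subst hjk
      by_cases hij : i = j
      · subst hij
        fin_cases i
        · exact key 0 1 (by decide)
        · exact key 1 0 (by decide)
      · rw [hsym x hx j (Pi.single i 1) (Pi.single j 1)]
        exact base j i j hij
    · exact base i j k hjk
  -- Part 2
  have P2 : ∀ x ∈ Ω, ∀ i j k : Fin 2,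
      iteratedFDerivWithin ℝ 3 φ Ω x ![Pi.single i 1, Pi.single j 1, Pi.single k 1] = 0 := by
    intro x hx i j k
    rw [iteratedFDerivWithin_of_isOpen 3 hΩ hx]
    have h3 : iteratedFDeriv ℝ 3 φ x ![Pi.single i 1, Pi.single j 1, Pi.single k 1]
        = fderiv ℝ (iteratedFDeriv ℝ 2 φ) x (Pi.single i 1) ![Pi.single j 1, Pi.single k 1] :=
      iteratedFDeriv_succ_apply_left _
    rw [h3]
    have hdi : DifferentiableAt ℝ (iteratedFDeriv ℝ 2 φ) x :=
      ((hφat x hx).iteratedFDeriv_right (m := 1) (i := 2) (WithTop.coe_le_coe.2 le_top)).differentiableAt one_ne_zero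
    rw [← fderiv_continuousMultilinear_apply_const_apply hdi ![Pi.single j 1, Pi.single k 1]
        (Pi.single i 1)]
    have heq : (fun y => iteratedFDeriv ℝ 2 φ y ![Pi.single j 1, Pi.single k 1]) =ᶠ[𝓝 x]
        (fun y => fderiv ℝ (g k) y (Pi.single j 1)) := by
      filter_upwards [hΩ.mem_nhds hx] with y hy
      rw [← iteratedFDerivWithin_of_isOpen 2 hΩ hy, ← hH y hy j k, HA y hy j k]
    rw [heq.fderiv_eq, aux_pull (hgd k x hx) (Pi.single i 1) (Pi.single j 1)]
    exact C0 x hx i j k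
  -- Part 3 : the Hessian is a constant multiple of the identity
  set L : (Fin 2 → ℝ) → ℝ := fun y => fderiv ℝ (g 0) y (Pi.single 0 1) with hL_def
  have hL0 : ∀ x ∈ Ω, HasFDerivAt L (0 : (Fin 2 → ℝ) →L[ℝ] ℝ) x := by
    intro x hx
    have hd : DifferentiableAt ℝ L x := (hgd 0 x hx).clm_apply (differentiableAt_const _)
    have hz : fderiv ℝ L x = 0 := by
      apply aux_clm_zero
      · rw [hL_def, aux_pull (hgd 0 x hx) (Pi.single 0 1) (Pi.single 0 1)]
        exact C0 x hx 0 0 0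
      · rw [hL_def, aux_pull (hgd 0 x hx) (Pi.single 1 1) (Pi.single 0 1)]
        exact C0 x hx 1 0 0
    have h := hd.hasFDerivAt
    rwa [hz] at h
  have lamconst := aux_const hΩ hpre hL0
  set lam : ℝ := L x₀ with hlam_def
  have hHdiag : ∀ x ∈ Ω, H x 0 0 = lam ∧ H x 1 1 = lam := by
    intro x hx
    have h00 : H x 0 0 = L x := by rw [HA x hx 0 0, hL_def]
    have h00' : H x 0 0 = lam := by rw [h00, hlam_def]; exact lamconst x hx x₀ h₀
    exact ⟨h00', by rw [← (P1 x hx).2]; exact h00'⟩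
  have hlam_pos : 0 < lam := by
    have hne : (Pi.single 0 1 : Fin 2 → ℝ) ≠ 0 := by
      intro h
      simpa using congrFun h 0
    have := (hpos x₀ h₀).dotProduct_mulVec_pos (x := Pi.single 0 1) hne
    have hcalc : dotProduct (star (Pi.single 0 1 : Fin 2 → ℝ)) ((H x₀) *ᵥ Pi.single 0 1)
        = H x₀ 0 0 := by
      simp [dotProduct, Matrix.mulVec, Fin.sum_univ_two]
    rw [hcalc, (hHdiag x₀ h₀).1] at this
    exact this
  have Hval : ∀ x ∈ Ω, ∀ i j : Fin 2, H x i j = lam * (Pi.single i 1 : Fin 2 → ℝ) j := by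
    intro x hx i j
    have fi : i = 0 ∨ i = 1 := by omega
    have fj : j = 0 ∨ j = 1 := by omega
    rcases fi with rfl | rfl <;> rcases fj with rfl | rfl
    · rw [(hHdiag x hx).1]; simp
    · rw [(P1 x hx).1]; simp
    · rw [P1' x hx]; simp
    · rw [(hHdiag x hx).2]; simp
  -- the gradient is affine
  set l : Fin 2 → ℝ := fun j => g j x₀ - lam * x₀ j with hl_def
  have hgrad : ∀ j : Fin 2, ∀ x ∈ Ω, g j x = lam * x j + l j := by
    intro j
    have hr0 : ∀ x ∈ Ω, HasFDerivAt (fun y => g j y - lam * y j)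
        (0 : (Fin 2 → ℝ) →L[ℝ] ℝ) x := by
      intro x hx
      have hproj : ∀ m : Fin 2, HasFDerivAt (fun y : Fin 2 → ℝ => y m)
          (ContinuousLinearMap.proj (R := ℝ) (φ := fun _ : Fin 2 => ℝ) m) x :=
        fun m => hasFDerivAt_apply m x
      have hdg : DifferentiableAt ℝ (g j) x := (hg2 j x hx).differentiableAt two_ne_zero
      have hdm : DifferentiableAt ℝ (fun y : Fin 2 → ℝ => lam * y j) x :=
        ((hproj j).differentiableAt).const_mul lam
      have hdr : DifferentiableAt ℝ (fun y => g j y - lam * y j) x := hdg.sub hdm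
      have hz : fderiv ℝ (fun y => g j y - lam * y j) x = 0 := by
        have hfd : fderiv ℝ (fun y => g j y - lam * y j) x =
            fderiv ℝ (g j) x - fderiv ℝ (fun y : Fin 2 → ℝ => lam * y j) x :=
          fderiv_sub hdg hdm
        apply aux_clm_zero
        · rw [hfd, ContinuousLinearMap.sub_apply, ← HA x hx 0 j,
            ((hproj j).const_mul lam).fderiv, Hval x hx 0 j]
          simp
        · rw [hfd, ContinuousLinearMap.sub_apply, ← HA x hx 1 j,
            ((hproj j).const_mul lam).fderiv, Hval x hx 1 j]
          simp
      have h := hdr.hasFDerivAt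
      rwa [hz] at h
    intro x hx
    have hcst := aux_const hΩ hpre hr0 x hx x₀ h₀
    simp only [hl_def]
    linarith [hcst]
  -- Part 3, conclusion
  refine ⟨P1, P2, lam / 2, l,
    φ x₀ - (lam / 2 * (x₀ 0 * x₀ 0 + x₀ 1 * x₀ 1) + (l 0 * x₀ 0 + l 1 * x₀ 1)),
    by linarith, ?_⟩
  intro x hx
  have hψ0 : ∀ z ∈ Ω, HasFDerivAt
      (fun y : Fin 2 → ℝ =>
        φ y - (lam / 2 * (y 0 * y 0 + y 1 * y 1) + (l 0 * y 0 + l 1 * y 1)))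
      (0 : (Fin 2 → ℝ) →L[ℝ] ℝ) z := by
    intro z hz
    have hproj : ∀ m : Fin 2, HasFDerivAt (fun y : Fin 2 → ℝ => y m)
        (ContinuousLinearMap.proj (R := ℝ) (φ := fun _ : Fin 2 => ℝ) m) z :=
      fun m => hasFDerivAt_apply m z
    have hφd : DifferentiableAt ℝ φ z := (hφat z hz).differentiableAt (by simp)
    have hP := ((((hproj 0).mul (hproj 0)).add ((hproj 1).mul (hproj 1))).const_mul
      (lam / 2)).add (((hproj 0).const_mul (l 0)).add ((hproj 1).const_mul (l 1)))
    have hkey := hφd.hasFDerivAt.sub hP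
    refine hkey.congr_fderiv ?_
    apply aux_clm_zero
    · have hg0 : fderiv ℝ φ z (Pi.single 0 1) = g 0 z := rfl
      simp only [ContinuousLinearMap.sub_apply, ContinuousLinearMap.add_apply,
        ContinuousLinearMap.smul_apply, ContinuousLinearMap.proj_apply, smul_eq_mul,
        Pi.single_apply]
      rw [hg0, hgrad 0 z hz]
      norm_num
      ring
    · have hg1 : fderiv ℝ φ z (Pi.single 1 1) = g 1 z := rfl
      simp only [ContinuousLinearMap.sub_apply, ContinuousLinearMap.add_apply,
        ContinuousLinearMap.smul_apply, ContinuousLinearMap.proj_apply, smul_eq_mul,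
        Pi.single_apply]
      rw [hg1, hgrad 1 z hz]
      norm_num
      ring
  have hcst := aux_const hΩ hpre hψ0 x hx x₀ h₀
  rw [pow_two, pow_two]
  linarith [hcst]
end

section
/- Let φ be smooth and strictly convex on a connected open set Ω ⊆ ℝ² such that at every point the Hessian has two distinct eigenvalues (equivalently (φ₂₂−φ₁₁, φ₁₂) ≠ (0,0) everywhere). If φ satisfies the relations (ζ−χ)ν + τ(υ−ω) = 0 and (ζ−χ)ω + τ(ν−ξ) = 0 (notation as for second and third derivatives), then there exists [a:b] ∈ ℝP¹ such that a(φ₁₁ − φ₂₂) = b φ₁₂ identically on Ω; i.e., the plane vector field (φ₂₂−φ₁₁, φ₁₂) has constant direction. -/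
open Matrix

section Aux

private lemma stmt17_alg (U V u₀ v₀ p s : ℝ) (hps : U * s = V * p) (hQ : U * U + V * V ≠ 0) :
    ((u₀ * V - v₀ * U) * (u₀ * V - v₀ * U)) *
        ((-((U * U + V * V) ^ 2)⁻¹) * ((U * p + U * p) + (V * s + V * s)))
      + (U * U + V * V)⁻¹ * ((u₀ * V - v₀ * U) * (u₀ * s - v₀ * p)
          + (u₀ * V - v₀ * U) * (u₀ * s - v₀ * p)) = 0 := by
  have key : (U * U + V * V) * ((u₀ * V - v₀ * U) * (u₀ * s - v₀ * p)
        + (u₀ * V - v₀ * U) * (u₀ * s - v₀ * p))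
      - ((u₀ * V - v₀ * U) * (u₀ * V - v₀ * U)) * ((U * p + U * p) + (V * s + V * s)) = 0 := by
    linear_combination (2 * (u₀ * V - v₀ * U) * (u₀ * U + v₀ * V)) * hps
  have hQQ : (U * U + V * V)⁻¹ * (U * U + V * V) = 1 := inv_mul_cancel₀ hQ
  have hsq : ((U * U + V * V) ^ 2)⁻¹ = (U * U + V * V)⁻¹ * (U * U + V * V)⁻¹ := by
    rw [sq, mul_inv]
  rw [hsq]
  linear_combination ((U * U + V * V)⁻¹ * (U * U + V * V)⁻¹) * key
    + (-((U * U + V * V)⁻¹ * ((u₀ * V - v₀ * U) * (u₀ * s - v₀ * p)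
        + (u₀ * V - v₀ * U) * (u₀ * s - v₀ * p)))) * hQQ

variable {Ω : Set (Fin 2 → ℝ)} {φ : (Fin 2 → ℝ) → ℝ}

private lemma stmt17_const_aux {f : (Fin 2 → ℝ) → ℝ}
    (hΩ : IsOpen Ω) (hconn : IsPreconnected Ω)
    (hd : ∀ x ∈ Ω, HasFDerivWithinAt f (0 : (Fin 2 → ℝ) →L[ℝ] ℝ) Ω x) :
    ∀ x ∈ Ω, ∀ y ∈ Ω, f x = f y := by
  have hball : ∀ x ∈ Ω, ∃ ε > 0, Metric.ball x ε ⊆ Ω ∧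
      ∀ y ∈ Metric.ball x ε, f y = f x := by
    intro x hx
    obtain ⟨ε, εpos, hsub⟩ := Metric.isOpen_iff.1 hΩ x hx
    refine ⟨ε, εpos, hsub, ?_⟩
    intro y hy
    have hdb : ∀ z ∈ Metric.ball x ε, HasFDerivWithinAt f 0 (Metric.ball x ε) z :=
      fun z hz => (hd z (hsub hz)).mono hsub
    have hdiff : DifferentiableOn ℝ f (Metric.ball x ε) :=
      fun z hz => (hdb z hz).differentiableWithinAt
    refine (convex_ball x ε).is_const_of_fderivWithin_eq_zero hdiff ?_ hy
      (Metric.mem_ball_self εpos)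
    intro z hz
    exact (hdb z hz).fderivWithin (Metric.isOpen_ball.uniqueDiffWithinAt hz)
  intro x hx y hy
  have hlc : IsLocallyConstant (fun z : Ω => f z.1) := by
    rw [IsLocallyConstant.iff_exists_open]
    rintro ⟨c, hc⟩
    obtain ⟨ε, εpos, hsub, hconst⟩ := hball c hc
    exact ⟨Subtype.val ⁻¹' Metric.ball c ε,
      Metric.isOpen_ball.preimage continuous_subtype_val,
      Metric.mem_ball_self εpos, fun z hz => hconst z.1 hz⟩
  have hps : PreconnectedSpace Ω := isPreconnected_iff_preconnectedSpace.1 hconn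
  exact hlc.apply_eq_of_preconnectedSpace ⟨x, hx⟩ ⟨y, hy⟩

private lemma stmt17_key (hΩ : IsOpen Ω) (hφ : ContDiffOn ℝ (⊤ : ℕ∞) φ Ω)
    {x : Fin 2 → ℝ} (hx : x ∈ Ω) (w : Fin 2 → (Fin 2 → ℝ)) :
    HasFDerivWithinAt (fun y => iteratedFDerivWithin ℝ 2 φ Ω y w)
      ((ContinuousMultilinearMap.apply ℝ (fun _ : Fin 2 => (Fin 2 → ℝ)) ℝ w).comp
        (fderivWithin ℝ (iteratedFDerivWithin ℝ 2 φ Ω) Ω x)) Ω x := by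
  have hU : UniqueDiffOn ℝ Ω := hΩ.uniqueDiffOn
  have hD2 : DifferentiableOn ℝ (iteratedFDerivWithin ℝ 2 φ Ω) Ω :=
    hφ.differentiableOn_iteratedFDerivWithin (WithTop.coe_lt_coe.2 (ENat.coe_lt_top 2)) hU
  exact (ContinuousMultilinearMap.apply ℝ _ ℝ w).hasFDerivAt.comp_hasFDerivWithinAt x
    ((hD2 x hx).hasFDerivWithinAt)

private lemma stmt17_sym2 (hΩ : IsOpen Ω) (hφ : ContDiffOn ℝ (⊤ : ℕ∞) φ Ω)
    {x : Fin 2 → ℝ} (hx : x ∈ Ω) (a b : Fin 2 → ℝ) :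
    iteratedFDerivWithin ℝ 2 φ Ω x ![a, b] = iteratedFDerivWithin ℝ 2 φ Ω x ![b, a] := by
  have hU : UniqueDiffOn ℝ Ω := hΩ.uniqueDiffOn
  rw [iteratedFDerivWithin_two_apply _ hU hx, iteratedFDerivWithin_two_apply _ hU hx]
  have hs := (hφ x hx).isSymmSndFDerivWithinAt (by rw [minSmoothness_of_isRCLikeNormedField]; exact WithTop.coe_le_coe.2 le_top) hU
    (by rw [hΩ.interior_eq]; exact subset_closure hx) hx
  simpa using hs a b

private lemma stmt17_sym12 (hΩ : IsOpen Ω) (hφ : ContDiffOn ℝ (⊤ : ℕ∞) φ Ω)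
    {x : Fin 2 → ℝ} (hx : x ∈ Ω) (a b c : Fin 2 → ℝ) :
    iteratedFDerivWithin ℝ 3 φ Ω x ![a, b, c] = iteratedFDerivWithin ℝ 3 φ Ω x ![b, a, c] := by
  have hU : UniqueDiffOn ℝ Ω := hΩ.uniqueDiffOn
  have hg : ContDiffOn ℝ 2 (fderivWithin ℝ φ Ω) Ω := hφ.fderivWithin hU (WithTop.coe_le_coe.2 le_top)
  have hs := (hg x hx).isSymmSndFDerivWithinAt (by simp) hU
    (by rw [hΩ.interior_eq]; exact subset_closure hx) hx
  have h1 := iteratedFDerivWithin_succ_apply_right (n := 2) (f := φ) hU hx ![a, b, c]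
  have h2 := iteratedFDerivWithin_succ_apply_right (n := 2) (f := φ) hU hx ![b, a, c]
  have i1 : Fin.init ![a, b, c] = ![a, b] := by funext i; fin_cases i <;> rfl
  have i2 : Fin.init ![b, a, c] = ![b, a] := by funext i; fin_cases i <;> rfl
  rw [i1] at h1; rw [i2] at h2
  rw [h1, h2, iteratedFDerivWithin_two_apply _ hU hx, iteratedFDerivWithin_two_apply _ hU hx]
  have := hs a b
  simp only [Matrix.cons_val_zero, Matrix.cons_val_one, Matrix.head_cons]
  rw [this]; rfl

private lemma stmt17_sym23 (hΩ : IsOpen Ω) (hφ : ContDiffOn ℝ (⊤ : ℕ∞) φ Ω)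
    {x : Fin 2 → ℝ} (hx : x ∈ Ω) (a b c : Fin 2 → ℝ) :
    iteratedFDerivWithin ℝ 3 φ Ω x ![a, b, c] = iteratedFDerivWithin ℝ 3 φ Ω x ![a, c, b] := by
  have h1 := stmt17_key hΩ hφ hx ![b, c]
  have h2 := stmt17_key hΩ hφ hx ![c, b]
  have h1' : HasFDerivWithinAt (fun y => iteratedFDerivWithin ℝ 2 φ Ω y ![c, b])
      ((ContinuousMultilinearMap.apply ℝ (fun _ : Fin 2 => (Fin 2 → ℝ)) ℝ ![b, c]).comp
        (fderivWithin ℝ (iteratedFDerivWithin ℝ 2 φ Ω) Ω x)) Ω x :=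
    h1.congr (fun y hy => stmt17_sym2 hΩ hφ hy c b) (stmt17_sym2 hΩ hφ hx c b)
  have heq := (hΩ.uniqueDiffOn x hx).eq h2 h1'
  have := DFunLike.congr_fun heq a
  exact (this.symm : _)

end Aux

set_option maxHeartbeats 1000000 in
/-- If a smooth strictly convex function of two variables has Hessian with two distinct
eigenvalues everywhere ((φ₂₂−φ₁₁, φ₁₂) ≠ (0,0)) and satisfies (ζ−χ)ν + τ(υ−ω) = 0 and
(ζ−χ)ω + τ(ν−ξ) = 0, then there is [a:b] ∈ ℝP¹ with a(φ₁₁ − φ₂₂) = b φ₁₂ identically. -/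
theorem stmt17 (Ω : Set (Fin 2 → ℝ)) (hΩ : IsOpen Ω) (hconn : IsConnected Ω)
    (φ : (Fin 2 → ℝ) → ℝ) (hφ : ContDiffOn ℝ (⊤ : ℕ∞) φ Ω)
    (χ τ ζ υ ν ω ξ : (Fin 2 → ℝ) → ℝ)
    (hχ : ∀ x ∈ Ω, χ x = iteratedFDerivWithin ℝ 2 φ Ω x
      ![Pi.single 0 1, Pi.single 0 1])
    (hτ : ∀ x ∈ Ω, τ x = iteratedFDerivWithin ℝ 2 φ Ω x
      ![Pi.single 0 1, Pi.single 1 1])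
    (hζ : ∀ x ∈ Ω, ζ x = iteratedFDerivWithin ℝ 2 φ Ω x
      ![Pi.single 1 1, Pi.single 1 1])
    (hυ : ∀ x ∈ Ω, υ x = iteratedFDerivWithin ℝ 3 φ Ω x
      ![Pi.single 0 1, Pi.single 0 1, Pi.single 0 1])
    (hν : ∀ x ∈ Ω, ν x = iteratedFDerivWithin ℝ 3 φ Ω x
      ![Pi.single 0 1, Pi.single 0 1, Pi.single 1 1])
    (hω : ∀ x ∈ Ω, ω x = iteratedFDerivWithin ℝ 3 φ Ω x
      ![Pi.single 0 1, Pi.single 1 1, Pi.single 1 1])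
    (hξ : ∀ x ∈ Ω, ξ x = iteratedFDerivWithin ℝ 3 φ Ω x
      ![Pi.single 1 1, Pi.single 1 1, Pi.single 1 1])
    (hconv : ∀ x ∈ Ω, 0 < χ x * ζ x - (τ x) ^ 2 ∧ 0 < χ x + ζ x)
    (hdist : ∀ x ∈ Ω, ¬(ζ x - χ x = 0 ∧ τ x = 0))
    (hrel : ∀ x ∈ Ω, (ζ x - χ x) * ν x + τ x * (υ x - ω x) = 0 ∧
        (ζ x - χ x) * ω x + τ x * (ν x - ξ x) = 0) :
    ∃ a b : ℝ, (a, b) ≠ (0, 0) ∧ ∀ x ∈ Ω, a * (χ x - ζ x) = b * τ x := by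
  obtain ⟨x₀, hx₀⟩ := hconn.nonempty
  have hU : UniqueDiffOn ℝ Ω := hΩ.uniqueDiffOn
  set u₀ : ℝ := ζ x₀ - χ x₀ with hu₀
  set v₀ : ℝ := τ x₀ with hv₀
  set uu : (Fin 2 → ℝ) → ℝ := fun y =>
    iteratedFDerivWithin ℝ 2 φ Ω y ![Pi.single 1 1, Pi.single 1 1]
      - iteratedFDerivWithin ℝ 2 φ Ω y ![Pi.single 0 1, Pi.single 0 1] with huu
  set vv : (Fin 2 → ℝ) → ℝ := fun y =>
    iteratedFDerivWithin ℝ 2 φ Ω y ![Pi.single 0 1, Pi.single 1 1] with hvv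
  have huux : ∀ x ∈ Ω, uu x = ζ x - χ x := by
    intro x hx; simp only [huu]; rw [← hζ x hx, ← hχ x hx]
  have hvvx : ∀ x ∈ Ω, vv x = τ x := by
    intro x hx; simp only [hvv]; rw [← hτ x hx]
  set F : (Fin 2 → ℝ) → ℝ := fun y => u₀ * vv y - v₀ * uu y with hF_def
  set Q : (Fin 2 → ℝ) → ℝ := fun y => uu y * uu y + vv y * vv y with hQ_def
  have hQpos : ∀ x ∈ Ω, 0 < Q x := by
    intro x hx
    simp only [hQ_def]
    rw [huux x hx, hvvx x hx]
    rcases not_and_or.1 (hdist x hx) with h | h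
    · nlinarith [mul_self_pos.2 h, mul_self_nonneg (τ x)]
    · nlinarith [mul_self_pos.2 h, mul_self_nonneg (ζ x - χ x)]
  have hH0 : ∀ x ∈ Ω, HasFDerivWithinAt (fun y => F y * F y * (Q y)⁻¹)
      (0 : (Fin 2 → ℝ) →L[ℝ] ℝ) Ω x := by
    intro x hx
    set L := fderivWithin ℝ (iteratedFDerivWithin ℝ 2 φ Ω) Ω x with hL
    set LU : (Fin 2 → ℝ) →L[ℝ] ℝ :=
      (ContinuousMultilinearMap.apply ℝ (fun _ : Fin 2 => (Fin 2 → ℝ)) ℝ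
          ![Pi.single 1 1, Pi.single 1 1]).comp L -
        (ContinuousMultilinearMap.apply ℝ (fun _ : Fin 2 => (Fin 2 → ℝ)) ℝ
          ![Pi.single 0 1, Pi.single 0 1]).comp L with hLU
    set LV : (Fin 2 → ℝ) →L[ℝ] ℝ :=
      (ContinuousMultilinearMap.apply ℝ (fun _ : Fin 2 => (Fin 2 → ℝ)) ℝ
          ![Pi.single 0 1, Pi.single 1 1]).comp L with hLV
    have hu : HasFDerivWithinAt uu LU Ω x :=
      (stmt17_key hΩ hφ hx _).sub (stmt17_key hΩ hφ hx _)
    have hv : HasFDerivWithinAt vv LV Ω x := stmt17_key hΩ hφ hx _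
    have hLU0 : LU (Pi.single 0 1) = ω x - υ x := by
      show iteratedFDerivWithin ℝ 3 φ Ω x ![Pi.single 0 1, Pi.single 1 1, Pi.single 1 1]
        - iteratedFDerivWithin ℝ 3 φ Ω x ![Pi.single 0 1, Pi.single 0 1, Pi.single 0 1]
        = ω x - υ x
      rw [← hω x hx, ← hυ x hx]
    have hLU1 : LU (Pi.single 1 1) = ξ x - ν x := by
      show iteratedFDerivWithin ℝ 3 φ Ω x ![Pi.single 1 1, Pi.single 1 1, Pi.single 1 1]
        - iteratedFDerivWithin ℝ 3 φ Ω x ![Pi.single 1 1, Pi.single 0 1, Pi.single 0 1]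
        = ξ x - ν x
      rw [stmt17_sym12 hΩ hφ hx (Pi.single 1 1) (Pi.single 0 1) (Pi.single 0 1),
        stmt17_sym23 hΩ hφ hx (Pi.single 0 1) (Pi.single 1 1) (Pi.single 0 1),
        ← hξ x hx, ← hν x hx]
    have hLV0 : LV (Pi.single 0 1) = ν x := by
      show iteratedFDerivWithin ℝ 3 φ Ω x ![Pi.single 0 1, Pi.single 0 1, Pi.single 1 1] = ν x
      rw [← hν x hx]
    have hLV1 : LV (Pi.single 1 1) = ω x := by
      show iteratedFDerivWithin ℝ 3 φ Ω x ![Pi.single 1 1, Pi.single 0 1, Pi.single 1 1] = ω x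
      rw [stmt17_sym12 hΩ hφ hx (Pi.single 1 1) (Pi.single 0 1) (Pi.single 1 1), ← hω x hx]
    have hF : HasFDerivWithinAt F (u₀ • LV - v₀ • LU) Ω x :=
      (hv.const_mul u₀).sub (hu.const_mul v₀)
    have hQ : HasFDerivWithinAt Q
        ((uu x • LU + uu x • LU) + (vv x • LV + vv x • LV)) Ω x :=
      (hu.mul hu).add (hv.mul hv)
    have hQne : Q x ≠ 0 := ne_of_gt (hQpos x hx)
    have hQinv : HasFDerivWithinAt (fun y => (Q y)⁻¹)
        ((-(Q x ^ 2)⁻¹) • ((uu x • LU + uu x • LU) + (vv x • LV + vv x • LV))) Ω x :=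
      (hasDerivAt_inv hQne).comp_hasFDerivWithinAt x hQ
    have hH : HasFDerivWithinAt (fun y => F y * F y * (Q y)⁻¹)
        ((F x * F x) • ((-(Q x ^ 2)⁻¹) • ((uu x • LU + uu x • LU) + (vv x • LV + vv x • LV)))
          + (Q x)⁻¹ • (F x • (u₀ • LV - v₀ • LU) + F x • (u₀ • LV - v₀ • LU))) Ω x :=
      (hF.mul hF).mul hQinv
    have hFx : F x = u₀ * τ x - v₀ * (ζ x - χ x) := by
      simp only [hF_def]; rw [huux x hx, hvvx x hx]
    have hQx : Q x = (ζ x - χ x) * (ζ x - χ x) + τ x * τ x := by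
      simp only [hQ_def]; rw [huux x hx, hvvx x hx]
    have hrel1 : (ζ x - χ x) * ν x = τ x * (ω x - υ x) := by
      have := (hrel x hx).1; linarith
    have hrel2 : (ζ x - χ x) * ω x = τ x * (ξ x - ν x) := by
      have := (hrel x hx).2; linarith
    have hQne' : (ζ x - χ x) * (ζ x - χ x) + τ x * τ x ≠ 0 := by
      rw [← hQx]; exact hQne
    have h0 : (F x * F x) * ((-(Q x ^ 2)⁻¹) *
          ((uu x * LU (Pi.single 0 1) + uu x * LU (Pi.single 0 1))
            + (vv x * LV (Pi.single 0 1) + vv x * LV (Pi.single 0 1))))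
        + (Q x)⁻¹ * (F x * (u₀ * LV (Pi.single 0 1) - v₀ * LU (Pi.single 0 1))
            + F x * (u₀ * LV (Pi.single 0 1) - v₀ * LU (Pi.single 0 1))) = 0 := by
      rw [hLU0, hLV0, hFx, hQx, huux x hx, hvvx x hx]
      exact stmt17_alg (ζ x - χ x) (τ x) u₀ v₀ (ω x - υ x) (ν x) hrel1 hQne'
    have h1 : (F x * F x) * ((-(Q x ^ 2)⁻¹) *
          ((uu x * LU (Pi.single 1 1) + uu x * LU (Pi.single 1 1))
            + (vv x * LV (Pi.single 1 1) + vv x * LV (Pi.single 1 1))))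
        + (Q x)⁻¹ * (F x * (u₀ * LV (Pi.single 1 1) - v₀ * LU (Pi.single 1 1))
            + F x * (u₀ * LV (Pi.single 1 1) - v₀ * LU (Pi.single 1 1))) = 0 := by
      rw [hLU1, hLV1, hFx, hQx, huux x hx, hvvx x hx]
      exact stmt17_alg (ζ x - χ x) (τ x) u₀ v₀ (ξ x - ν x) (ω x) hrel2 hQne'
    have hM : ((F x * F x) • ((-(Q x ^ 2)⁻¹) • ((uu x • LU + uu x • LU) + (vv x • LV + vv x • LV)))
          + (Q x)⁻¹ • (F x • (u₀ • LV - v₀ • LU) + F x • (u₀ • LV - v₀ • LU)))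
        = (0 : (Fin 2 → ℝ) →L[ℝ] ℝ) := by
      apply ContinuousLinearMap.ext
      intro y
      have hy : y = y 0 • (Pi.single 0 1 : Fin 2 → ℝ) + y 1 • (Pi.single 1 1 : Fin 2 → ℝ) := by
        funext i; fin_cases i <;> simp
      rw [hy]
      simp only [map_add, _root_.map_smul, ContinuousLinearMap.add_apply,
        ContinuousLinearMap.smul_apply, ContinuousLinearMap.sub_apply,
        ContinuousLinearMap.zero_apply, smul_eq_mul]
      linear_combination (y 0) * h0 + (y 1) * h1
    rw [← hM]
    exact hH
  have hconst := stmt17_const_aux hΩ hconn.isPreconnected hH0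
  have hFzero : ∀ x ∈ Ω, F x = 0 := by
    intro x hx
    have h := hconst x hx x₀ hx₀
    have hFx₀ : F x₀ = 0 := by
      simp only [hF_def]
      rw [huux x₀ hx₀, hvvx x₀ hx₀, hu₀, hv₀]; ring
    rw [hFx₀] at h
    simp only [zero_mul, mul_zero] at h
    have hQne : Q x ≠ 0 := ne_of_gt (hQpos x hx)
    rcases mul_eq_zero.1 h with h' | h'
    · exact mul_self_eq_zero.1 h'
    · exact absurd (inv_eq_zero.1 h') hQne
  refine ⟨-v₀, u₀, ?_, ?_⟩
  · intro h
    rw [Prod.mk.injEq] at h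
    refine hdist x₀ hx₀ ⟨?_, ?_⟩
    · rw [← hu₀]; exact h.2
    · rw [← hv₀]; linarith [neg_eq_zero.1 h.1]
  · intro x hx
    have h := hFzero x hx
    have hFx : F x = u₀ * τ x - v₀ * (ζ x - χ x) := by
      simp only [hF_def]; rw [huux x hx, hvvx x hx]
    rw [hFx] at h
    linear_combination -h
end
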